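/- Type translation well-formedness: if an economical type S is well-formed under context Γ, then the target type |S| is well-formed under the translated context |Γ|. -/

import Mathlib

set_option autoImplicit true

namespace EOPoly

/-! ### Evaluation orders and valuenesses -/

inductive EO
  | V | N | evar (a : ℕ)
  deriving DecidableEq, Repr

inductive Valueness
  | val | top
  deriving DecidableEq, Repr

/-- The partial order on valuenesses: `val ⊑ val`, `val ⊑ ⊤`, `⊤ ⊑ ⊤`. -/
def Valueness.le : Valueness → Valueness → Prop
  | .val, _ => True
  | .top, v => v = .top

/-- Join of valuenesses. -/
def Valueness.join : Valueness → Valueness → Valueness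
  | .val, .val => .val
  | _, _ => .top

/-- Valueness of an evaluation order: `⌊V⌋ = val`, otherwise `⊤`. -/
def EO.valof : EO → Valueness
  | .V => .val
  | _ => .top

/-- Substitution `[ε/a]` on evaluation orders. -/
def EO.substEO (ε : EO) (a : ℕ) : EO → EO
  | .evar b => if b = a then ε else .evar b
  | .V => .V
  | .N => .N

/-! ### Impartial types -/

inductive ITy
  | unit
  | tvar (α : ℕ)
  | all (α : ℕ) (τ : ITy)
  | alleo (a : ℕ) (τ : ITy)
  | arr (ε : EO) (τ₁ τ₂ : ITy)
  | prod (ε : EO) (τ₁ τ₂ : ITy)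
  | sum (ε : EO) (τ₁ τ₂ : ITy)
  | mu (ε : EO) (α : ℕ) (τ : ITy)
  deriving DecidableEq, Repr

/-- `[ε/a]τ` -/
def ITy.substEO (ε : EO) (a : ℕ) : ITy → ITy
  | .unit => .unit
  | .tvar β => .tvar β
  | .all β τ => .all β (ITy.substEO ε a τ)
  | .alleo b τ => .alleo b (if b = a then τ else ITy.substEO ε a τ)
  | .arr e τ₁ τ₂ => .arr (EO.substEO ε a e) (ITy.substEO ε a τ₁) (ITy.substEO ε a τ₂)
  | .prod e τ₁ τ₂ => .prod (EO.substEO ε a e) (ITy.substEO ε a τ₁) (ITy.substEO ε a τ₂)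
  | .sum e τ₁ τ₂ => .sum (EO.substEO ε a e) (ITy.substEO ε a τ₁) (ITy.substEO ε a τ₂)
  | .mu e β τ => .mu (EO.substEO ε a e) β (ITy.substEO ε a τ)

/-- `[σ/α]τ` -/
def ITy.substTy (σ : ITy) (α : ℕ) : ITy → ITy
  | .unit => .unit
  | .tvar β => if β = α then σ else .tvar β
  | .all β τ => .all β (if β = α then τ else ITy.substTy σ α τ)
  | .alleo b τ => .alleo b (ITy.substTy σ α τ)
  | .arr e τ₁ τ₂ => .arr e (ITy.substTy σ α τ₁) (ITy.substTy σ α τ₂)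
  | .prod e τ₁ τ₂ => .prod e (ITy.substTy σ α τ₁) (ITy.substTy σ α τ₂)
  | .sum e τ₁ τ₂ => .sum e (ITy.substTy σ α τ₁) (ITy.substTy σ α τ₂)
  | .mu e β τ => .mu e β (if β = α then τ else ITy.substTy σ α τ)

/-- N-freeness of impartial types: every evaluation-order decoration is V,
    and there are no Да quantifiers. -/
def ITy.NFree : ITy → Prop
  | .unit => True
  | .tvar _ => True
  | .all _ τ => τ.NFree
  | .alleo _ _ => False
  | .arr ε τ₁ τ₂ => ε = .V ∧ τ₁.NFree ∧ τ₂.NFree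
  | .prod ε τ₁ τ₂ => ε = .V ∧ τ₁.NFree ∧ τ₂.NFree
  | .sum ε τ₁ τ₂ => ε = .V ∧ τ₁.NFree ∧ τ₂.NFree
  | .mu ε _ τ => ε = .V ∧ τ.NFree

/-! ### Economical types -/

inductive STy
  | unit
  | tvar (α : ℕ)
  | all (α : ℕ) (S : STy)
  | alleo (a : ℕ) (S : STy)
  | susp (ε : EO) (S : STy)
  | arr (S₁ S₂ : STy)
  | prod (S₁ S₂ : STy)
  | sum (S₁ S₂ : STy)
  | mu (α : ℕ) (S : STy)
  deriving DecidableEq, Repr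

/-- `[ε/a]S` -/
def STy.substEO (ε : EO) (a : ℕ) : STy → STy
  | .unit => .unit
  | .tvar β => .tvar β
  | .all β S => .all β (STy.substEO ε a S)
  | .alleo b S => .alleo b (if b = a then S else STy.substEO ε a S)
  | .susp e S => .susp (EO.substEO ε a e) (STy.substEO ε a S)
  | .arr S₁ S₂ => .arr (STy.substEO ε a S₁) (STy.substEO ε a S₂)
  | .prod S₁ S₂ => .prod (STy.substEO ε a S₁) (STy.substEO ε a S₂)
  | .sum S₁ S₂ => .sum (STy.substEO ε a S₁) (STy.substEO ε a S₂)
  | .mu β S => .mu β (STy.substEO ε a S)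

/-- `[S'/α]S` -/
def STy.substTy (σ : STy) (α : ℕ) : STy → STy
  | .unit => .unit
  | .tvar β => if β = α then σ else .tvar β
  | .all β S => .all β (if β = α then S else STy.substTy σ α S)
  | .alleo b S => .alleo b (STy.substTy σ α S)
  | .susp e S => .susp e (STy.substTy σ α S)
  | .arr S₁ S₂ => .arr (STy.substTy σ α S₁) (STy.substTy σ α S₂)
  | .prod S₁ S₂ => .prod (STy.substTy σ α S₁) (STy.substTy σ α S₂)
  | .sum S₁ S₂ => .sum (STy.substTy σ α S₁) (STy.substTy σ α S₂)
  | .mu β S => .mu β (if β = α then S else STy.substTy σ α S)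

/-- N-freeness of economical types: every suspension is `▷V`, no Да quantifiers. -/
def STy.NFree : STy → Prop
  | .unit => True
  | .tvar _ => True
  | .all _ S => S.NFree
  | .alleo _ _ => False
  | .susp ε S => ε = .V ∧ S.NFree
  | .arr S₁ S₂ => S₁.NFree ∧ S₂.NFree
  | .prod S₁ S₂ => S₁.NFree ∧ S₂.NFree
  | .sum S₁ S₂ => S₁.NFree ∧ S₂.NFree
  | .mu _ S => S.NFree

def STy.size : STy → ℕ
  | .unit => 1
  | .tvar _ => 1
  | .all _ S => S.size + 1
  | .alleo _ S => S.size + 1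
  | .susp _ S => S.size + 1
  | .arr S₁ S₂ => S₁.size + S₂.size + 1
  | .prod S₁ S₂ => S₁.size + S₂.size + 1
  | .sum S₁ S₂ => S₁.size + S₂.size + 1
  | .mu _ S => S.size + 1

theorem STy.size_substEO (ε : EO) (a : ℕ) :
    ∀ S : STy, (STy.substEO ε a S).size = S.size := by
  intro S
  induction S with
  | alleo b S ih =>
      simp only [STy.substEO]
      split <;> simp [STy.size, ih]
  | _ => simp_all [STy.substEO, STy.size]

/-! ### Target types -/

inductive TTy
  | unit
  | tvar (α : ℕ)
  | all (α : ℕ) (A : TTy)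
  | arr (A₁ A₂ : TTy)
  | thunk (A : TTy)
  | prod (A₁ A₂ : TTy)
  | sum (A₁ A₂ : TTy)
  | mu (α : ℕ) (A : TTy)
  deriving DecidableEq, Repr

/-- `[A'/α]A` -/
def TTy.substTy (σ : TTy) (α : ℕ) : TTy → TTy
  | .unit => .unit
  | .tvar β => if β = α then σ else .tvar β
  | .all β A => .all β (if β = α then A else TTy.substTy σ α A)
  | .arr A₁ A₂ => .arr (TTy.substTy σ α A₁) (TTy.substTy σ α A₂)
  | .thunk A => .thunk (TTy.substTy σ α A)
  | .prod A₁ A₂ => .prod (TTy.substTy σ α A₁) (TTy.substTy σ α A₂)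
  | .sum A₁ A₂ => .sum (TTy.substTy σ α A₁) (TTy.substTy σ α A₂)
  | .mu β A => .mu β (if β = α then A else TTy.substTy σ α A)

/-! ### Source expressions (with type annotations drawn from `T`) -/

inductive Expr (T : Type)
  | unit
  | var (x : ℕ)
  | fvar (u : ℕ)
  | lam (x : ℕ) (e : Expr T)
  | app (e₁ e₂ : Expr T)
  | fix (u : ℕ) (e : Expr T)
  | tylam (α : ℕ) (e : Expr T)
  | tyapp (e : Expr T) (τ : T)
  | anno (e : Expr T) (τ : T)
  | pair (e₁ e₂ : Expr T)
  | proj (k : Bool) (e : Expr T)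
  | inj (k : Bool) (e : Expr T)
  | case (e : Expr T) (x₁ : ℕ) (e₁ : Expr T) (x₂ : ℕ) (e₂ : Expr T)

/-- Map over the type annotations of an expression. -/
def Expr.mapTy (f : T → T') : Expr T → Expr T'
  | .unit => .unit
  | .var x => .var x
  | .fvar u => .fvar u
  | .lam x e => .lam x (e.mapTy f)
  | .app e₁ e₂ => .app (e₁.mapTy f) (e₂.mapTy f)
  | .fix u e => .fix u (e.mapTy f)
  | .tylam α e => .tylam α (e.mapTy f)
  | .tyapp e τ => .tyapp (e.mapTy f) (f τ)
  | .anno e τ => .anno (e.mapTy f) (f τ)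
  | .pair e₁ e₂ => .pair (e₁.mapTy f) (e₂.mapTy f)
  | .proj k e => .proj k (e.mapTy f)
  | .inj k e => .inj k (e.mapTy f)
  | .case e x₁ e₁ x₂ e₂ => .case (e.mapTy f) x₁ (e₁.mapTy f) x₂ (e₂.mapTy f)

/-- N-freeness of an expression, given a notion of N-freeness `P` on its
    annotation types: every type appearing in the expression satisfies `P`. -/
def Expr.NFree (P : T → Prop) : Expr T → Prop
  | .unit => True
  | .var _ => True
  | .fvar _ => True
  | .lam _ e => e.NFree P
  | .app e₁ e₂ => e₁.NFree P ∧ e₂.NFree P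
  | .fix _ e => e.NFree P
  | .tylam _ e => e.NFree P
  | .tyapp e τ => e.NFree P ∧ P τ
  | .anno e τ => e.NFree P ∧ P τ
  | .pair e₁ e₂ => e₁.NFree P ∧ e₂.NFree P
  | .proj _ e => e.NFree P
  | .inj _ e => e.NFree P
  | .case e _ e₁ _ e₂ => e.NFree P ∧ e₁.NFree P ∧ e₂.NFree P

/-! ### Type-erased source expressions -/

inductive EExpr
  | unit
  | var (x : ℕ)
  | fvar (u : ℕ)
  | lam (x : ℕ) (e : EExpr)
  | app (e₁ e₂ : EExpr)
  | fix (u : ℕ) (e : EExpr)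
  | pair (e₁ e₂ : EExpr)
  | proj (k : Bool) (e : EExpr)
  | inj (k : Bool) (e : EExpr)
  | case (e : EExpr) (x₁ : ℕ) (e₁ : EExpr) (x₂ : ℕ) (e₂ : EExpr)
  deriving DecidableEq, Repr

/-- Erasure: remove type annotations, type abstractions, and type applications. -/
def Expr.erase : Expr T → EExpr
  | .unit => .unit
  | .var x => .var x
  | .fvar u => .fvar u
  | .lam x e => .lam x e.erase
  | .app e₁ e₂ => .app e₁.erase e₂.erase
  | .fix u e => .fix u e.erase
  | .tylam _ e => e.erase
  | .tyapp e _ => e.erase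
  | .anno e _ => e.erase
  | .pair e₁ e₂ => .pair e₁.erase e₂.erase
  | .proj k e => .proj k e.erase
  | .inj k e => .inj k e.erase
  | .case e x₁ e₁ x₂ e₂ => .case e.erase x₁ e₁.erase x₂ e₂.erase

/-- Substitution `[e'/x]e` of an expression for an ordinary variable. -/
def EExpr.substV (e' : EExpr) (x : ℕ) : EExpr → EExpr
  | .unit => .unit
  | .var y => if y = x then e' else .var y
  | .fvar u => .fvar u
  | .lam y e => .lam y (if y = x then e else EExpr.substV e' x e)
  | .app e₁ e₂ => .app (EExpr.substV e' x e₁) (EExpr.substV e' x e₂)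
  | .fix u e => .fix u (EExpr.substV e' x e)
  | .pair e₁ e₂ => .pair (EExpr.substV e' x e₁) (EExpr.substV e' x e₂)
  | .proj k e => .proj k (EExpr.substV e' x e)
  | .inj k e => .inj k (EExpr.substV e' x e)
  | .case e y₁ e₁ y₂ e₂ =>
      .case (EExpr.substV e' x e) y₁ (if y₁ = x then e₁ else EExpr.substV e' x e₁)
            y₂ (if y₂ = x then e₂ else EExpr.substV e' x e₂)

/-- Substitution `[e'/u]e` of an expression for a fixed-point variable. -/
def EExpr.substU (e' : EExpr) (u : ℕ) : EExpr → EExpr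
  | .unit => .unit
  | .var y => .var y
  | .fvar w => if w = u then e' else .fvar w
  | .lam y e => .lam y (EExpr.substU e' u e)
  | .app e₁ e₂ => .app (EExpr.substU e' u e₁) (EExpr.substU e' u e₂)
  | .fix w e => .fix w (if w = u then e else EExpr.substU e' u e)
  | .pair e₁ e₂ => .pair (EExpr.substU e' u e₁) (EExpr.substU e' u e₂)
  | .proj k e => .proj k (EExpr.substU e' u e)
  | .inj k e => .inj k (EExpr.substU e' u e)
  | .case e y₁ e₁ y₂ e₂ =>
      .case (EExpr.substU e' u e) y₁ (EExpr.substU e' u e₁) y₂ (EExpr.substU e' u e₂)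

/-- Syntactic source values: `() | λx.e | (v₁,v₂) | inj_k v`. -/
inductive EExpr.IsVal : EExpr → Prop
  | unit : EExpr.IsVal .unit
  | lam : EExpr.IsVal (.lam x e)
  | pair : EExpr.IsVal v₁ → EExpr.IsVal v₂ → EExpr.IsVal (.pair v₁ v₂)
  | inj : EExpr.IsVal v → EExpr.IsVal (.inj k v)

/-! ### Source reduction and stepping -/

/-- By-value reduction. -/
inductive SrcRedV : EExpr → EExpr → Prop
  | beta : EExpr.IsVal v → SrcRedV (.app (.lam x e) v) (EExpr.substV v x e)
  | fix : SrcRedV (.fix u e) (EExpr.substU (.fix u e) u e)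
  | proj1 : EExpr.IsVal v₁ → EExpr.IsVal v₂ →
      SrcRedV (.proj true (.pair v₁ v₂)) v₁
  | proj2 : EExpr.IsVal v₁ → EExpr.IsVal v₂ →
      SrcRedV (.proj false (.pair v₁ v₂)) v₂
  | case1 : EExpr.IsVal v →
      SrcRedV (.case (.inj true v) x₁ e₁ x₂ e₂) (EExpr.substV v x₁ e₁)
  | case2 : EExpr.IsVal v →
      SrcRedV (.case (.inj false v) x₁ e₁ x₂ e₂) (EExpr.substV v x₂ e₂)

/-- By-name reduction. -/
inductive SrcRedN : EExpr → EExpr → Prop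
  | beta : SrcRedN (.app (.lam x e) e₂) (EExpr.substV e₂ x e)
  | fix : SrcRedN (.fix u e) (EExpr.substU (.fix u e) u e)
  | proj1 : SrcRedN (.proj true (.pair e₁ e₂)) e₁
  | proj2 : SrcRedN (.proj false (.pair e₁ e₂)) e₂
  | case1 : SrcRedN (.case (.inj true e) x₁ e₁ x₂ e₂) (EExpr.substV e x₁ e₁)
  | case2 : SrcRedN (.case (.inj false e) x₁ e₁ x₂ e₂) (EExpr.substV e x₂ e₂)

/-- Stepping via by-value evaluation contexts, with by-value reductions
    (rule SrcStepContextV). -/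
inductive StepV : EExpr → EExpr → Prop
  | red : SrcRedV e e' → StepV e e'
  | app1 : StepV e₁ e₁' → StepV (.app e₁ e₂) (.app e₁' e₂)
  | app2 : EExpr.IsVal v₁ → StepV e₂ e₂' → StepV (.app v₁ e₂) (.app v₁ e₂')
  | pair1 : StepV e₁ e₁' → StepV (.pair e₁ e₂) (.pair e₁' e₂)
  | pair2 : EExpr.IsVal v₁ → StepV e₂ e₂' → StepV (.pair v₁ e₂) (.pair v₁ e₂')
  | proj : StepV e e' → StepV (.proj k e) (.proj k e')
  | inj : StepV e e' → StepV (.inj k e) (.inj k e')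
  | case : StepV e e' →
      StepV (.case e x₁ e₁ x₂ e₂) (.case e' x₁ e₁ x₂ e₂)

/-- Stepping via by-name evaluation contexts, with by-name reductions
    (rule SrcStepContextN). -/
inductive StepN : EExpr → EExpr → Prop
  | red : SrcRedN e e' → StepN e e'
  | app1 : StepN e₁ e₁' → StepN (.app e₁ e₂) (.app e₁' e₂)
  | proj : StepN e e' → StepN (.proj k e) (.proj k e')
  | inj : StepN e e' → StepN (.inj k e) (.inj k e')
  | case : StepN e e' →
      StepN (.case e x₁ e₁ x₂ e₂) (.case e' x₁ e₁ x₂ e₂)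

/-- The source stepping relation `e ⇝ e'`: either a by-value step or a
    by-name step. -/
def StepSrc (e e' : EExpr) : Prop := StepV e e' ∨ StepN e e'

/-! ### Target terms -/

inductive Tm
  | unit
  | var (x : ℕ)
  | lam (x : ℕ) (M : Tm)
  | app (M₁ M₂ : Tm)
  | fvar (u : ℕ)
  | fix (u : ℕ) (M : Tm)
  | tylam (M : Tm)
  | tyapp (M : Tm)
  | thunk (M : Tm)
  | force (M : Tm)
  | pair (M₁ M₂ : Tm)
  | proj (k : Bool) (M : Tm)
  | inj (k : Bool) (M : Tm)
  | case (M : Tm) (x₁ : ℕ) (M₁ : Tm) (x₂ : ℕ) (M₂ : Tm)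
  | roll (M : Tm)
  | unroll (M : Tm)
  deriving DecidableEq, Repr

/-- Target values W. -/
inductive Tm.IsVal : Tm → Prop
  | unit : Tm.IsVal .unit
  | var : Tm.IsVal (.var x)
  | lam : Tm.IsVal (.lam x M)
  | tylam : Tm.IsVal (.tylam M)
  | thunk : Tm.IsVal (.thunk M)
  | pair : Tm.IsVal W₁ → Tm.IsVal W₂ → Tm.IsVal (.pair W₁ W₂)
  | inj : Tm.IsVal W → Tm.IsVal (.inj k W)
  | roll : Tm.IsVal W → Tm.IsVal (.roll W)

/-- Valuables Ṽ. -/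
inductive Tm.IsValuable : Tm → Prop
  | unit : Tm.IsValuable .unit
  | var : Tm.IsValuable (.var x)
  | lam : Tm.IsValuable (.lam x M)
  | tylam : Tm.IsValuable V → Tm.IsValuable (.tylam V)
  | tyapp : Tm.IsValuable V → Tm.IsValuable (.tyapp V)
  | thunk : Tm.IsValuable (.thunk M)
  | pair : Tm.IsValuable V₁ → Tm.IsValuable V₂ → Tm.IsValuable (.pair V₁ V₂)
  | proj : Tm.IsValuable V → Tm.IsValuable (.proj k V)
  | inj : Tm.IsValuable V → Tm.IsValuable (.inj k V)
  | roll : Tm.IsValuable V → Tm.IsValuable (.roll V)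
  | unroll : Tm.IsValuable V → Tm.IsValuable (.unroll V)

/-- Substitution `[M'/x]M` for an ordinary target variable. -/
def Tm.substV (M' : Tm) (x : ℕ) : Tm → Tm
  | .unit => .unit
  | .var y => if y = x then M' else .var y
  | .lam y M => .lam y (if y = x then M else Tm.substV M' x M)
  | .app M₁ M₂ => .app (Tm.substV M' x M₁) (Tm.substV M' x M₂)
  | .fvar u => .fvar u
  | .fix u M => .fix u (Tm.substV M' x M)
  | .tylam M => .tylam (Tm.substV M' x M)
  | .tyapp M => .tyapp (Tm.substV M' x M)
  | .thunk M => .thunk (Tm.substV M' x M)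
  | .force M => .force (Tm.substV M' x M)
  | .pair M₁ M₂ => .pair (Tm.substV M' x M₁) (Tm.substV M' x M₂)
  | .proj k M => .proj k (Tm.substV M' x M)
  | .inj k M => .inj k (Tm.substV M' x M)
  | .case M y₁ M₁ y₂ M₂ =>
      .case (Tm.substV M' x M) y₁ (if y₁ = x then M₁ else Tm.substV M' x M₁)
            y₂ (if y₂ = x then M₂ else Tm.substV M' x M₂)
  | .roll M => .roll (Tm.substV M' x M)
  | .unroll M => .unroll (Tm.substV M' x M)

/-- Substitution `[M'/u]M` for a target fixed-point variable. -/
def Tm.substU (M' : Tm) (u : ℕ) : Tm → Tm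
  | .unit => .unit
  | .var y => .var y
  | .lam y M => .lam y (Tm.substU M' u M)
  | .app M₁ M₂ => .app (Tm.substU M' u M₁) (Tm.substU M' u M₂)
  | .fvar w => if w = u then M' else .fvar w
  | .fix w M => .fix w (if w = u then M else Tm.substU M' u M)
  | .tylam M => .tylam (Tm.substU M' u M)
  | .tyapp M => .tyapp (Tm.substU M' u M)
  | .thunk M => .thunk (Tm.substU M' u M)
  | .force M => .force (Tm.substU M' u M)
  | .pair M₁ M₂ => .pair (Tm.substU M' u M₁) (Tm.substU M' u M₂)
  | .proj k M => .proj k (Tm.substU M' u M)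
  | .inj k M => .inj k (Tm.substU M' u M)
  | .case M y₁ M₁ y₂ M₂ =>
      .case (Tm.substU M' u M) y₁ (Tm.substU M' u M₁) y₂ (Tm.substU M' u M₂)
  | .roll M => .roll (Tm.substU M' u M)
  | .unroll M => .unroll (Tm.substU M' u M)

/-- N-freeness of target terms: no `thunk` or `force` constructs. -/
def Tm.NFree : Tm → Prop
  | .unit => True
  | .var _ => True
  | .lam _ M => M.NFree
  | .app M₁ M₂ => M₁.NFree ∧ M₂.NFree
  | .fvar _ => True
  | .fix _ M => M.NFree
  | .tylam M => M.NFree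
  | .tyapp M => M.NFree
  | .thunk _ => False
  | .force _ => False
  | .pair M₁ M₂ => M₁.NFree ∧ M₂.NFree
  | .proj _ M => M.NFree
  | .inj _ M => M.NFree
  | .case M _ M₁ _ M₂ => M.NFree ∧ M₁.NFree ∧ M₂.NFree
  | .roll M => M.NFree
  | .unroll M => M.NFree

/-! ### Target reduction and stepping -/

/-- Target reduction `M ⇒_R M'`. -/
inductive TRed : Tm → Tm → Prop
  | beta : Tm.IsVal W → TRed (.app (.lam x M) W) (Tm.substV W x M)
  | force : TRed (.force (.thunk M)) M
  | fix : TRed (.fix u M) (Tm.substU (.fix u M) u M)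
  | tyapp : TRed (.tyapp (.tylam M)) M
  | proj1 : Tm.IsVal W₁ → Tm.IsVal W₂ → TRed (.proj true (.pair W₁ W₂)) W₁
  | proj2 : Tm.IsVal W₁ → Tm.IsVal W₂ → TRed (.proj false (.pair W₁ W₂)) W₂
  | case1 : Tm.IsVal W →
      TRed (.case (.inj true W) x₁ M₁ x₂ M₂) (Tm.substV W x₁ M₁)
  | case2 : Tm.IsVal W →
      TRed (.case (.inj false W) x₁ M₁ x₂ M₂) (Tm.substV W x₂ M₂)
  | unroll : Tm.IsVal W → TRed (.unroll (.roll W)) W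

/-- Target stepping `M ↦ M'`: closure of reduction under (call-by-value)
    evaluation contexts. -/
inductive TStep : Tm → Tm → Prop
  | red : TRed M M' → TStep M M'
  | app1 : TStep M₁ M₁' → TStep (.app M₁ M₂) (.app M₁' M₂)
  | app2 : Tm.IsVal W₁ → TStep M₂ M₂' → TStep (.app W₁ M₂) (.app W₁ M₂')
  | tyapp : TStep M M' → TStep (.tyapp M) (.tyapp M')
  | force : TStep M M' → TStep (.force M) (.force M')
  | pair1 : TStep M₁ M₁' → TStep (.pair M₁ M₂) (.pair M₁' M₂)
  | pair2 : Tm.IsVal W₁ → TStep M₂ M₂' → TStep (.pair W₁ M₂) (.pair W₁ M₂')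
  | proj : TStep M M' → TStep (.proj k M) (.proj k M')
  | inj : TStep M M' → TStep (.inj k M) (.inj k M')
  | case : TStep M M' →
      TStep (.case M x₁ M₁ x₂ M₂) (.case M' x₁ M₁ x₂ M₂)
  | roll : TStep M M' → TStep (.roll M) (.roll M')
  | unroll : TStep M M' → TStep (.unroll M) (.unroll M')

/-! ### Contexts -/

inductive IDecl
  | ivar (x : ℕ) (φ : Valueness) (τ : ITy)
  | ifvar (u : ℕ) (τ : ITy)
  | ieo (a : ℕ)
  | ity (α : ℕ)
  deriving DecidableEq

abbrev ICtx := List IDecl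

inductive SDecl
  | svar (x : ℕ) (S : STy)
  | sfvar (u : ℕ) (S : STy)
  | seo (a : ℕ)
  | sty (α : ℕ)
  deriving DecidableEq

abbrev ECtx := List SDecl

inductive TDecl
  | tvar (x : ℕ) (A : TTy)
  | tfvar (u : ℕ) (A : TTy)
  | ttyvar (α : ℕ)
  deriving DecidableEq

abbrev TCtx := List TDecl

/-- N-freeness of impartial context declarations. -/
def IDecl.NFree : IDecl → Prop
  | .ivar _ φ τ => φ = .val ∧ τ.NFree
  | .ifvar _ τ => τ.NFree
  | .ieo _ => False
  | .ity _ => True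

/-- N-freeness of economical context declarations. -/
def SDecl.NFree : SDecl → Prop
  | .svar _ S => S.NFree
  | .sfvar _ S => S.NFree
  | .seo _ => False
  | .sty _ => True

/-- `[ε/a]` on an economical declaration. -/
def SDecl.substEO (ε : EO) (a : ℕ) : SDecl → SDecl
  | .svar x S => .svar x (STy.substEO ε a S)
  | .sfvar u S => .sfvar u (STy.substEO ε a S)
  | .seo b => .seo b
  | .sty α => .sty α

/-! ### Well-formedness -/

inductive EOWfI : ICtx → EO → Prop
  | V : EOWfI γ .V
  | N : EOWfI γ .N
  | evar : IDecl.ieo a ∈ γ → EOWfI γ (.evar a)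

inductive ITyWf : ICtx → ITy → Prop
  | unit : ITyWf γ .unit
  | tvar : IDecl.ity α ∈ γ → ITyWf γ (.tvar α)
  | all : ITyWf (.ity α :: γ) τ → ITyWf γ (.all α τ)
  | alleo : ITyWf (.ieo a :: γ) τ → ITyWf γ (.alleo a τ)
  | arr : EOWfI γ ε → ITyWf γ τ₁ → ITyWf γ τ₂ → ITyWf γ (.arr ε τ₁ τ₂)
  | prod : EOWfI γ ε → ITyWf γ τ₁ → ITyWf γ τ₂ → ITyWf γ (.prod ε τ₁ τ₂)
  | sum : EOWfI γ ε → ITyWf γ τ₁ → ITyWf γ τ₂ → ITyWf γ (.sum ε τ₁ τ₂)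
  | mu : EOWfI γ ε → ITyWf (.ity α :: γ) τ → ITyWf γ (.mu ε α τ)

inductive EOWfS : ECtx → EO → Prop
  | V : EOWfS Γ .V
  | N : EOWfS Γ .N
  | evar : SDecl.seo a ∈ Γ → EOWfS Γ (.evar a)

inductive STyWf : ECtx → STy → Prop
  | unit : STyWf Γ .unit
  | tvar : SDecl.sty α ∈ Γ → STyWf Γ (.tvar α)
  | all : STyWf (.sty α :: Γ) S → STyWf Γ (.all α S)
  | alleo : STyWf (.seo a :: Γ) S → STyWf Γ (.alleo a S)
  | susp : EOWfS Γ ε → STyWf Γ S → STyWf Γ (.susp ε S)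
  | arr : STyWf Γ S₁ → STyWf Γ S₂ → STyWf Γ (.arr S₁ S₂)
  | prod : STyWf Γ S₁ → STyWf Γ S₂ → STyWf Γ (.prod S₁ S₂)
  | sum : STyWf Γ S₁ → STyWf Γ S₂ → STyWf Γ (.sum S₁ S₂)
  | mu : STyWf (.sty α :: Γ) S → STyWf Γ (.mu α S)

inductive TTyWf : TCtx → TTy → Prop
  | unit : TTyWf G .unit
  | tvar : TDecl.ttyvar α ∈ G → TTyWf G (.tvar α)
  | all : TTyWf (.ttyvar α :: G) A → TTyWf G (.all α A)
  | arr : TTyWf G A₁ → TTyWf G A₂ → TTyWf G (.arr A₁ A₂)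
  | thunk : TTyWf G A → TTyWf G (.thunk A)
  | prod : TTyWf G A₁ → TTyWf G A₂ → TTyWf G (.prod A₁ A₂)
  | sum : TTyWf G A₁ → TTyWf G A₂ → TTyWf G (.sum A₁ A₂)
  | mu : TTyWf (.ttyvar α :: G) A → TTyWf G (.mu α A)

/-! ### Impartial bidirectional typing -/

mutual
inductive IChk : ICtx → Expr ITy → Valueness → ITy → Prop
  | sub : ISyn γ e φ τ → IChk γ e φ τ
  | fix : IChk (IDecl.ifvar u τ :: γ) e φ τ → IChk γ (.fix u e) .top τ
  | unitI : IChk γ .unit .val .unit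
  | allI : IChk (IDecl.ity α :: γ) e .val τ →
      IChk γ (.tylam α e) .val (.all α τ)
  | alleoI : IChk (IDecl.ieo a :: γ) e .val τ →
      IChk γ e .val (.alleo a τ)
  | arrI : IChk (IDecl.ivar x ε.valof τ₁ :: γ) e φ τ₂ →
      IChk γ (.lam x e) .val (.arr ε τ₁ τ₂)
  | prodI : IChk γ e₁ φ₁ τ₁ → IChk γ e₂ φ₂ τ₂ →
      IChk γ (.pair e₁ e₂) (φ₁.join φ₂) (.prod ε τ₁ τ₂)
  | injI : IChk γ e φ (cond k τ₁ τ₂) →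
      IChk γ (.inj k e) φ (.sum ε τ₁ τ₂)
  | caseE : ISyn γ e φ₀ (.sum ε τ₁ τ₂) →
      IChk (IDecl.ivar x₁ .val τ₁ :: γ) e₁ φ₁ τ →
      IChk (IDecl.ivar x₂ .val τ₂ :: γ) e₂ φ₂ τ →
      IChk γ (.case e x₁ e₁ x₂ e₂) .top τ
  | muI : IChk γ e φ (ITy.substTy (.mu ε α τ) α τ) →
      IChk γ e φ (.mu ε α τ)

inductive ISyn : ICtx → Expr ITy → Valueness → ITy → Prop
  | var : IDecl.ivar x φ τ ∈ γ → ISyn γ (.var x) φ τ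
  | fvar : IDecl.ifvar u τ ∈ γ → ISyn γ (.fvar u) .top τ
  | anno : IChk γ e φ τ → ISyn γ (.anno e τ) φ τ
  | allE : ISyn γ e φ (.all α τ) → ITyWf γ τ' →
      ISyn γ (.tyapp e τ') φ (ITy.substTy τ' α τ)
  | alleoE : ISyn γ e φ (.alleo a τ) → EOWfI γ ε →
      ISyn γ e φ (ITy.substEO ε a τ)
  | arrE : ISyn γ e₁ φ₁ (.arr ε τ₁ τ₂) → IChk γ e₂ φ₂ τ₁ →
      ISyn γ (.app e₁ e₂) .top τ₂
  | projE : ISyn γ e φ (.prod ε τ₁ τ₂) →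
      ISyn γ (.proj k e) .top (cond k τ₁ τ₂)
  | muE : ISyn γ e φ (.mu ε α τ) →
      ISyn γ e .top (ITy.substTy (.mu ε α τ) α τ)
end

/-! ### Economical bidirectional typing -/

mutual
inductive EChk : ECtx → Expr STy → Valueness → STy → Prop
  | sub : ESyn Γ e φ S → EChk Γ e φ S
  | fix : EChk (SDecl.sfvar u S :: Γ) e φ S → EChk Γ (.fix u e) .top S
  | unitI : EChk Γ .unit .val .unit
  | allI : EChk (SDecl.sty α :: Γ) e .val S →
      EChk Γ (.tylam α e) .val (.all α S)
  | alleoI : EChk (SDecl.seo a :: Γ) e .val S →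
      EChk Γ e .val (.alleo a S)
  | suspI : EChk Γ e φ S → EChk Γ e φ (.susp ε S)
  | suspIN : EChk Γ e φ S → EChk Γ e .val (.susp .N S)
  | arrI : EChk (SDecl.svar x S₁ :: Γ) e φ S₂ →
      EChk Γ (.lam x e) .val (.arr S₁ S₂)
  | prodI : EChk Γ e₁ φ₁ S₁ → EChk Γ e₂ φ₂ S₂ →
      EChk Γ (.pair e₁ e₂) (φ₁.join φ₂) (.prod S₁ S₂)
  | injI : EChk Γ e φ (cond k S₁ S₂) →
      EChk Γ (.inj k e) φ (.sum S₁ S₂)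
  | caseE : ESyn Γ e φ₀ (.sum S₁ S₂) →
      EChk (SDecl.svar x₁ S₁ :: Γ) e₁ φ₁ S →
      EChk (SDecl.svar x₂ S₂ :: Γ) e₂ φ₂ S →
      EChk Γ (.case e x₁ e₁ x₂ e₂) .top S
  | muI : EChk Γ e φ (STy.substTy (.mu α S) α S) →
      EChk Γ e φ (.mu α S)

inductive ESyn : ECtx → Expr STy → Valueness → STy → Prop
  | var : SDecl.svar x S ∈ Γ → ESyn Γ (.var x) .val S
  | fvar : SDecl.sfvar u S ∈ Γ → ESyn Γ (.fvar u) .top S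
  | anno : EChk Γ e φ S → ESyn Γ (.anno e S) φ S
  | allE : ESyn Γ e φ (.all α S) → STyWf Γ S' →
      ESyn Γ (.tyapp e S') φ (STy.substTy S' α S)
  | alleoE : ESyn Γ e φ (.alleo a S) → EOWfS Γ ε →
      ESyn Γ e φ (STy.substEO ε a S)
  | suspEV : ESyn Γ e φ (.susp .V S) → ESyn Γ e φ S
  | suspE : ESyn Γ e φ (.susp ε S) → ESyn Γ e .top S
  | arrE : ESyn Γ e₁ φ₁ (.arr S₁ S₂) → EChk Γ e₂ φ₂ S₁ →
      ESyn Γ (.app e₁ e₂) .top S₂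
  | projE : ESyn Γ e φ (.prod S₁ S₂) →
      ESyn Γ (.proj k e) .top (cond k S₁ S₂)
  | muE : ESyn Γ e φ (.mu α S) →
      ESyn Γ e .top (STy.substTy (.mu α S) α S)
end

/-! ### Target typing -/

inductive TTyping : TCtx → Tm → TTy → Prop
  | unitI : TTyping G .unit .unit
  | var : TDecl.tvar x A ∈ G → TTyping G (.var x) A
  | fvar : TDecl.tfvar u A ∈ G → TTyping G (.fvar u) A
  | fix : TTyping (TDecl.tfvar u A :: G) M A → TTyping G (.fix u M) A
  | allI : Tm.IsValuable M → TTyping (TDecl.ttyvar α :: G) M A →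
      TTyping G (.tylam M) (.all α A)
  | allE : TTyping G M (.all α A) → TTyWf G A' →
      TTyping G (.tyapp M) (TTy.substTy A' α A)
  | arrI : TTyping (TDecl.tvar x A :: G) M B →
      TTyping G (.lam x M) (.arr A B)
  | arrE : TTyping G M₁ (.arr A B) → TTyping G M₂ A →
      TTyping G (.app M₁ M₂) B
  | thunkI : TTyping G M B → TTyping G (.thunk M) (.thunk B)
  | thunkE : TTyping G M (.thunk B) → TTyping G (.force M) B
  | prodI : TTyping G M₁ A₁ → TTyping G M₂ A₂ →
      TTyping G (.pair M₁ M₂) (.prod A₁ A₂)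
  | prodE : TTyping G M (.prod A₁ A₂) →
      TTyping G (.proj k M) (cond k A₁ A₂)
  | injI : TTyping G M (cond k A₁ A₂) →
      TTyping G (.inj k M) (.sum A₁ A₂)
  | caseE : TTyping G M (.sum A₁ A₂) →
      TTyping (TDecl.tvar x₁ A₁ :: G) M₁ A →
      TTyping (TDecl.tvar x₂ A₂ :: G) M₂ A →
      TTyping G (.case M x₁ M₁ x₂ M₂) A
  | muI : TTyping G M (TTy.substTy (.mu α A) α A) →
      TTyping G (.roll M) (.mu α A)
  | muE : TTyping G M (.mu α A) →
      TTyping G (.unroll M) (TTy.substTy (.mu α A) α A)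

/-! ### Elaboration -/

inductive Elab : ECtx → EExpr → Valueness → STy → Tm → Prop
  | var : SDecl.svar x S ∈ Γ → Elab Γ (.var x) .val S (.var x)
  | fvar : SDecl.sfvar u S ∈ Γ → Elab Γ (.fvar u) .top S (.fvar u)
  | fix : Elab (SDecl.sfvar u S :: Γ) e φ S M →
      Elab Γ (.fix u e) .top S (.fix u M)
  | unitI : Elab Γ .unit .val .unit .unit
  | allI : Elab (SDecl.sty α :: Γ) e .val S M →
      Elab Γ e .val (.all α S) (.tylam M)
  | allE : Elab Γ e φ (.all α S) M → STyWf Γ S' →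
      Elab Γ e φ (STy.substTy S' α S) (.tyapp M)
  | alleoI : Elab Γ e .val (STy.substEO .V a S) M₁ →
      Elab Γ e .val (STy.substEO .N a S) M₂ →
      Elab Γ e .val (.alleo a S) (.pair M₁ M₂)
  | alleoEV : Elab Γ e φ (.alleo a S) M →
      Elab Γ e φ (STy.substEO .V a S) (.proj true M)
  | alleoEN : Elab Γ e φ (.alleo a S) M →
      Elab Γ e φ (STy.substEO .N a S) (.proj false M)
  | suspIV : Elab Γ e φ S M → Elab Γ e φ (.susp .V S) M
  | suspIN : Elab Γ e φ S M → Elab Γ e .val (.susp .N S) (.thunk M)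
  | suspEV : Elab Γ e φ (.susp .V S) M → Elab Γ e φ S M
  | suspEN : Elab Γ e φ (.susp .N S) M → Elab Γ e .top S (.force M)
  | arrI : Elab (SDecl.svar x S₁ :: Γ) e φ S₂ M →
      Elab Γ (.lam x e) .val (.arr S₁ S₂) (.lam x M)
  | arrE : Elab Γ e₁ φ₁ (.arr S₁ S₂) M₁ → Elab Γ e₂ φ₂ S₁ M₂ →
      Elab Γ (.app e₁ e₂) .top S₂ (.app M₁ M₂)
  | prodI : Elab Γ e₁ φ₁ S₁ M₁ → Elab Γ e₂ φ₂ S₂ M₂ →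
      Elab Γ (.pair e₁ e₂) (φ₁.join φ₂) (.prod S₁ S₂) (.pair M₁ M₂)
  | prodE : Elab Γ e φ (.prod S₁ S₂) M →
      Elab Γ (.proj k e) .top (cond k S₁ S₂) (.proj k M)
  | injI : Elab Γ e φ (cond k S₁ S₂) M →
      Elab Γ (.inj k e) φ (.sum S₁ S₂) (.inj k M)
  | caseE : Elab Γ e φ₀ (.sum S₁ S₂) M₀ →
      Elab (SDecl.svar x₁ S₁ :: Γ) e₁ φ₁ S M₁ →
      Elab (SDecl.svar x₂ S₂ :: Γ) e₂ φ₂ S M₂ →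
      Elab Γ (.case e x₁ e₁ x₂ e₂) .top S (.case M₀ x₁ M₁ x₂ M₂)
  | muI : Elab Γ e φ (STy.substTy (.mu α S) α S) M →
      Elab Γ e φ (.mu α S) (.roll M)
  | muE : Elab Γ e φ (.mu α S) M →
      Elab Γ e .top (STy.substTy (.mu α S) α S) (.unroll M)

/-! ### Translations -/

/-- Translation from impartial types to economical types `⟦τ⟧`. -/
def econtrans : ITy → STy
  | .unit => .unit
  | .tvar α => .tvar α
  | .all α τ => .all α (econtrans τ)
  | .alleo a τ => .alleo a (econtrans τ)
  | .arr ε τ₁ τ₂ => .arr (.susp ε (econtrans τ₁)) (econtrans τ₂)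
  | .prod ε τ₁ τ₂ => .prod (.susp ε (econtrans τ₁)) (.susp ε (econtrans τ₂))
  | .sum ε τ₁ τ₂ => .susp ε (.sum (econtrans τ₁) (econtrans τ₂))
  | .mu ε α τ => .mu α (.susp ε (econtrans τ))

/-- Translation of impartial context declarations. -/
def IDecl.econtrans : IDecl → SDecl
  | .ivar x .val τ => .svar x (.susp .V (EOPoly.econtrans τ))
  | .ivar x .top τ => .svar x (.susp .N (EOPoly.econtrans τ))
  | .ifvar u τ => .sfvar u (EOPoly.econtrans τ)
  | .ieo a => .seo a
  | .ity α => .sty α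

def ctxecontrans : ICtx → ECtx := List.map IDecl.econtrans

/-- Translation of source expressions: replace each annotation τ by `⟦τ⟧`. -/
def expecontrans : Expr ITy → Expr STy := Expr.mapTy econtrans

/-- Translation from economical types to target types `|S|`. -/
def tytrans : STy → TTy
  | .unit => .unit
  | .tvar α => .tvar α
  | .all α S => .all α (tytrans S)
  | .alleo a S => .prod (tytrans (STy.substEO .V a S)) (tytrans (STy.substEO .N a S))
  | .susp .V S => tytrans S
  | .susp .N S => .thunk (tytrans S)
  | .susp (.evar _) S => tytrans S
  | .arr S₁ S₂ => .arr (tytrans S₁) (tytrans S₂)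
  | .prod S₁ S₂ => .prod (tytrans S₁) (tytrans S₂)
  | .sum S₁ S₂ => .sum (tytrans S₁) (tytrans S₂)
  | .mu α S => .mu α (tytrans S)
termination_by S => S.size
decreasing_by all_goals (simp [STy.size, STy.size_substEO]) <;> omega

/-- Translation of economical contexts to target contexts
    (evaluation-order declarations are dropped; in the paper the translation
    is undefined on them, and the theorems only use contexts without them). -/
def SDecl.tytrans? : SDecl → Option TDecl
  | .svar x S => some (.tvar x (EOPoly.tytrans S))
  | .sfvar u S => some (.tfvar u (EOPoly.tytrans S))
  | .seo _ => none
  | .sty α => some (.ttyvar α)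

def ctxtrans : ECtx → TCtx := List.filterMap SDecl.tytrans?

/-! The proof recurses on the size of `S`. The one non-structural case is `Да.S`, whose
translation is built from `[V/a]S` and `[N/a]S`: these have the size of `S` and, by the
substitution lemma `STyWf.substEO`, are well-formed in `Γ` without the declaration of `a`. -/

theorem EOWfS.mono {Γ Γ' : ECtx} {ε : EO} (h : EOWfS Γ ε) (hsub : Γ ⊆ Γ') :
    EOWfS Γ' ε := by
  cases h with
  | V => exact .V
  | N => exact .N
  | evar hm => exact .evar (hsub hm)

theorem STyWf.mono {Γ Γ' : ECtx} {S : STy} (h : STyWf Γ S) (hsub : Γ ⊆ Γ') :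
    STyWf Γ' S := by
  induction h generalizing Γ' with
  | unit => exact .unit
  | tvar hm => exact .tvar (hsub hm)
  | all _ ih => exact .all (ih (List.cons_subset_cons _ hsub))
  | alleo _ ih => exact .alleo (ih (List.cons_subset_cons _ hsub))
  | susp he _ ih => exact .susp (he.mono hsub) (ih hsub)
  | arr _ _ ih₁ ih₂ => exact .arr (ih₁ hsub) (ih₂ hsub)
  | prod _ _ ih₁ ih₂ => exact .prod (ih₁ hsub) (ih₂ hsub)
  | sum _ _ ih₁ ih₂ => exact .sum (ih₁ hsub) (ih₂ hsub)
  | mu _ ih => exact .mu (ih (List.cons_subset_cons _ hsub))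

theorem EOWfS.substEO {Γ Γ' : ECtx} {a : ℕ} {e ε : EO} (he : EOWfS Γ e)
    (hsub : Γ ⊆ .seo a :: Γ') (hε : EOWfS Γ' ε) : EOWfS Γ' (EO.substEO ε a e) := by
  cases he with
  | V => exact .V
  | N => exact .N
  | @evar b hm =>
    rw [EO.substEO]
    split_ifs with hba
    · exact hε
    · obtain hb | hb := List.mem_cons.1 (hsub hm)
      · exact absurd (SDecl.seo.inj hb) hba
      · exact .evar hb

theorem subset_cons_cons_swap {x y : SDecl} {Γ Γ' : ECtx} (h : Γ ⊆ x :: Γ') :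
    y :: Γ ⊆ x :: y :: Γ' :=
  List.cons_subset.2
    ⟨by simp, List.Subset.trans h (List.cons_subset_cons _ (List.subset_cons_self _ _))⟩

theorem STyWf.substEO {Γ Γ' : ECtx} {a : ℕ} {S : STy} {ε : EO} (h : STyWf Γ S)
    (hsub : Γ ⊆ .seo a :: Γ') (hε : EOWfS Γ' ε) : STyWf Γ' (STy.substEO ε a S) := by
  induction h generalizing Γ' with
  | unit => exact .unit
  | tvar hm =>
    obtain hα | hα := List.mem_cons.1 (hsub hm)
    · cases hα
    · exact .tvar hα
  | all _ ih => exact .all (ih (subset_cons_cons_swap hsub) (hε.mono (List.subset_cons_self _ _)))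
  | alleo hS ih =>
    rw [STy.substEO]
    split_ifs with hba
    · -- the inner binder shadows `a`, so `S` is left alone
      subst hba
      exact .alleo (hS.mono (List.Subset.trans (List.cons_subset_cons _ hsub) (by simp)))
    · exact .alleo (ih (subset_cons_cons_swap hsub) (hε.mono (List.subset_cons_self _ _)))
  | susp he _ ih => exact .susp (he.substEO hsub hε) (ih hsub hε)
  | arr _ _ ih₁ ih₂ => exact .arr (ih₁ hsub hε) (ih₂ hsub hε)
  | prod _ _ ih₁ ih₂ => exact .prod (ih₁ hsub hε) (ih₂ hsub hε)
  | sum _ _ ih₁ ih₂ => exact .sum (ih₁ hsub hε) (ih₂ hsub hε)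
  | mu _ ih => exact .mu (ih (subset_cons_cons_swap hsub) (hε.mono (List.subset_cons_self _ _)))

theorem ttyvar_mem_ctxtrans {Γ : ECtx} {α : ℕ} (h : SDecl.sty α ∈ Γ) :
    TDecl.ttyvar α ∈ ctxtrans Γ :=
  List.mem_filterMap.2 ⟨_, h, rfl⟩

/-- **Type translation well-formedness.**
If `Γ ⊢ S type` then `|Γ| ⊢ |S| type`. -/
theorem tytrans_wf (Γ : ECtx) (S : STy) (h : STyWf Γ S) :
    TTyWf (ctxtrans Γ) (tytrans S) := by
  cases h with
  | unit => rw [tytrans]; exact .unit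
  | tvar hm => rw [tytrans]; exact .tvar (ttyvar_mem_ctxtrans hm)
  | all hS => rw [tytrans]; exact .all (tytrans_wf _ _ hS)
  | alleo hS =>
    rw [tytrans]
    exact .prod (tytrans_wf _ _ (hS.substEO (List.Subset.refl _) .V))
      (tytrans_wf _ _ (hS.substEO (List.Subset.refl _) .N))
  | @susp _ ε _ _ hS =>
    cases ε <;> rw [tytrans]
    · exact tytrans_wf _ _ hS
    · exact .thunk (tytrans_wf _ _ hS)
    · exact tytrans_wf _ _ hS
  | arr h₁ h₂ => rw [tytrans]; exact .arr (tytrans_wf _ _ h₁) (tytrans_wf _ _ h₂)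
  | prod h₁ h₂ => rw [tytrans]; exact .prod (tytrans_wf _ _ h₁) (tytrans_wf _ _ h₂)
  | sum h₁ h₂ => rw [tytrans]; exact .sum (tytrans_wf _ _ h₁) (tytrans_wf _ _ h₂)
  | mu hS => rw [tytrans]; exact .mu (tytrans_wf _ _ hS)
termination_by S.size
decreasing_by all_goals simp only [STy.size, STy.size_substEO]; omega

end EOPoly
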